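/- arXiv:2011.00576 — 3 statements merged into one kernel-verified Lean document; each statement's English description precedes it below -/
import Mathlib

section
/- There is a universal constant c > 0 such that for every d ≥ 3 and every nonempty finite set Y ⊆ {0,1}^d \ {0} with ∪_{x∈Y} supp(x) = {1,…,d}, letting k = max_{x∈Y} ‖x‖₁, there exists a probability vector λ on Y such that every diagonal entry of A_semi(λ) is positive and (E_η[ max_{x∈Y} x^⊤ A_semi(λ)^{-1/2} η ])² ≤ c · d · k · log d. (This is the semi-bandit case of the paper's Proposition 4, bounding the worst-case Gaussian width of a combinatorial action set by c·d·k·log d.) -/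
/-!
The design is a maximiser `a` of the regularised log-determinant `a ↦ ∑ᵢ log (δ + aᵢ)` over the
convex hull of `Y`, with `δ = 1 / (2d)`. The first-order condition at `a` in the directions of
the vertices gives `∑ᵢ yᵢ / (δ + aᵢ) ≤ d` for every `y ∈ Y` (Kiefer–Wolfowitz for diagonal
designs); as `Y` covers every coordinate this forces `aᵢ ≥ δ`, hence `∑ᵢ yᵢ / aᵢ ≤ 2d`.
So each `η ↦ xᵀ A^{-1/2} η` is sub-Gaussian with variance proxy `2d`, and the Chernoff bound for
the maximum of `#Y` sub-Gaussian variables gives `(E max)² ≤ 4d log #Y`. A binary vector is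
determined by its support, so `#Y ≤ (d + 1)^k` and `log #Y ≤ 2k log d`.
-/

open MeasureTheory ProbabilityTheory

noncomputable def stdGaussian (d : ℕ) : Measure (Fin d → ℝ) :=
  Measure.pi fun _ => gaussianReal 0 1

open Real Finset
open scoped NNReal

instance (d : ℕ) : IsProbabilityMeasure (stdGaussian d) := by
  unfold _root_.stdGaussian; infer_instance

lemma Finset.exp_mul_sup'_le_sum {ι : Type*} {s : Finset ι} (hs : s.Nonempty) (f : ι → ℝ)
    (t : ℝ) : exp (t * s.sup' hs f) ≤ ∑ j ∈ s, exp (t * f j) := by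
  obtain ⟨j, hj, hsup⟩ := s.exists_mem_eq_sup' hs f
  rw [hsup]
  exact single_le_sum (f := fun j => exp (t * f j)) (fun j _ => (exp_pos _).le) hj

lemma MeasureTheory.integrable_finset_sup' {Ω ι : Type*} [MeasurableSpace Ω] {μ : Measure Ω}
    {s : Finset ι} (hs : s.Nonempty) {X : ι → Ω → ℝ}
    (hX : ∀ j ∈ s, Integrable (X j) μ) : Integrable (fun ω => s.sup' hs (X · ω)) μ := by
  have : Integrable (s.sup' hs X) μ :=
    Finset.sup'_induction hs X (p := fun f => Integrable f μ) (fun _ hf _ hg => hf.sup hg) hX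
  convert this using 1
  ext ω
  rw [Finset.sup'_apply]

namespace ProbabilityTheory

variable {Ω ι : Type*} [MeasurableSpace Ω] {μ : Measure Ω}

lemma HasSubgaussianMGF.mono {X : Ω → ℝ} {c c' : ℝ≥0} (h : HasSubgaussianMGF X c μ)
    (hc : c ≤ c') : HasSubgaussianMGF X c' μ where
  integrable_exp_mul := h.integrable_exp_mul
  mgf_le t := (h.mgf_le t).trans (exp_le_exp.2 (by gcongr))

lemma hasSubgaussianMGF_gaussianReal (v : ℝ≥0) :
    HasSubgaussianMGF (fun x => x) v (gaussianReal 0 v) where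
  integrable_exp_mul := integrable_exp_mul_gaussianReal
  mgf_le t := by simp [mgf_fun_id_gaussianReal]

lemma hasSubgaussianMGF_sum_mul_pi {n : Type*} [Fintype n] {ν : n → Measure ℝ}
    [∀ i, IsProbabilityMeasure (ν i)] {σ : n → ℝ≥0}
    (h : ∀ i, HasSubgaussianMGF (fun x => x) (σ i) (ν i)) (c : n → ℝ) :
    HasSubgaussianMGF (fun η : n → ℝ => ∑ i, c i * η i)
      (∑ i, ‖c i‖₊ ^ 2 * σ i) (Measure.pi ν) :=
  HasSubgaussianMGF.sum_of_iIndepFun (iIndepFun_pi (X := fun i x => c i * x) fun _ => by fun_prop)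
    fun i _ => .of_map (measurable_pi_apply i).aemeasurable
      (X := fun x => c i * x) <| by
        have hc : ‖c i‖₊ ^ 2 = ⟨c i ^ 2, sq_nonneg _⟩ := NNReal.eq (sq_abs (c i))
        rw [(measurePreserving_eval ν i).map_eq, hc]
        exact (h i).const_mul (c i)

variable [IsProbabilityMeasure μ] {s : Finset ι} {X : ι → Ω → ℝ} {c : ℝ≥0}

lemma mul_integral_finset_sup'_le (hs : s.Nonempty) (h : ∀ j ∈ s, HasSubgaussianMGF (X j) c μ)
    (t : ℝ) : t * ∫ ω, s.sup' hs (X · ω) ∂μ ≤ log #s + c * t ^ 2 / 2 := by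
  have hsum : Integrable (fun ω => ∑ j ∈ s, exp (t * X j ω)) μ :=
    integrable_finsetSum s fun j hj => (h j hj).integrable_exp_mul t
  have hsup := integrable_finset_sup' hs fun j hj => (h j hj).integrable
  have hexp : Integrable (fun ω => exp (t * s.sup' hs (X · ω))) μ :=
    hsum.mono' ((continuous_exp.comp_aestronglyMeasurable (hsup.const_mul t).1))
      (ae_of_all _ fun ω => by
        rw [norm_of_nonneg (exp_pos _).le]
        exact s.exp_mul_sup'_le_sum hs _ t)
  have hjensen : exp (t * ∫ ω, s.sup' hs (X · ω) ∂μ) ≤ ∫ ω, exp (t * s.sup' hs (X · ω)) ∂μ := by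
    rw [← integral_const_mul]
    exact convexOn_exp.map_integral_le continuous_exp.continuousOn isClosed_univ
      (ae_of_all _ fun _ => Set.mem_univ _) (hsup.const_mul t) hexp
  have hmgf : ∫ ω, exp (t * s.sup' hs (X · ω)) ∂μ ≤ #s * exp (c * t ^ 2 / 2) :=
    calc ∫ ω, exp (t * s.sup' hs (X · ω)) ∂μ ≤ ∫ ω, ∑ j ∈ s, exp (t * X j ω) ∂μ :=
          integral_mono hexp hsum fun ω => s.exp_mul_sup'_le_sum hs _ t
      _ = ∑ j ∈ s, mgf (X j) μ t :=
          integral_finsetSum s fun j hj => (h j hj).integrable_exp_mul t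
      _ ≤ ∑ j ∈ s, exp (c * t ^ 2 / 2) := sum_le_sum fun j hj => (h j hj).mgf_le t
      _ = #s * exp (c * t ^ 2 / 2) := by rw [sum_const, nsmul_eq_mul]
  have hcard : (0 : ℝ) < #s := by exact_mod_cast hs.card_pos
  rw [← exp_le_exp, exp_add, exp_log hcard]
  exact hjensen.trans hmgf

lemma sq_integral_finset_sup'_le (hs : s.Nonempty) (h : ∀ j ∈ s, HasSubgaussianMGF (X j) c μ)
    (hc : 0 < c) : (∫ ω, s.sup' hs (X · ω) ∂μ) ^ 2 ≤ 2 * c * log #s := by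
  set M := ∫ ω, s.sup' hs (X · ω) ∂μ
  have hc' : (0 : ℝ) < c := hc
  -- optimise the Chernoff exponent: `t = M / c`
  have := mul_integral_finset_sup'_le hs h (M / c)
  have hM : M / c * M - c * (M / c) ^ 2 / 2 = M ^ 2 / (2 * c) := by field_simp; ring
  have : M ^ 2 / (2 * c) ≤ log #s := by linarith
  rwa [div_le_iff₀ (by positivity), mul_comm] at this

end ProbabilityTheory

lemma hasSubgaussianMGF_stdGaussian_sum_mul_div_sqrt {d : ℕ} {x a : Fin d → ℝ}
    (hx : ∀ i, x i = 0 ∨ x i = 1) (ha : ∀ i, 0 < a i) {σ : ℝ≥0} (hσ : ∑ i, x i / a i ≤ σ) :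
    HasSubgaussianMGF (fun η => ∑ i, x i * η i / √(a i)) σ (stdGaussian d) := by
  have hsub := hasSubgaussianMGF_sum_mul_pi (fun _ : Fin d => hasSubgaussianMGF_gaussianReal 1)
    fun i => x i / √(a i)
  refine (hsub.mono ?_).congr (ae_of_all _ fun η => sum_congr rfl fun i _ => div_mul_eq_mul_div ..)
  rw [← NNReal.coe_le_coe]
  push_cast
  refine le_of_eq_of_le (sum_congr rfl fun i _ => ?_) hσ
  rw [mul_one, Real.norm_eq_abs, sq_abs, div_pow, sq_sqrt (ha i).le]
  rcases hx i with h | h <;> simp [h]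

lemma Real.log_add_one_le_two_mul_log {x : ℝ} (hx : 2 ≤ x) : log (x + 1) ≤ 2 * log x := by
  rw [← log_rpow (by linarith), rpow_two]
  exact log_le_log (by linarith) (by nlinarith)

lemma Nat.sum_range_choose_le_pow (m K : ℕ) :
    ∑ j ∈ range (K + 1), m.choose j ≤ (m + 1) ^ K := by
  induction K with
  | zero => simp
  | succ K ih =>
    rw [sum_range_succ, pow_succ, mul_add_one, add_comm ((m + 1) ^ K * m)]
    gcongr
    calc m.choose (K + 1) ≤ m ^ (K + 1) := Nat.choose_le_pow m (K + 1)
      _ = m ^ K * m := pow_succ m K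
      _ ≤ (m + 1) ^ K * m := by gcongr; omega

section

variable {n : Type*} [Fintype n]

lemma Finset.card_le_pow_of_forall_card_le {s : Finset (Finset n)} {K : ℕ}
    (h : ∀ t ∈ s, #t ≤ K) : #s ≤ (Fintype.card n + 1) ^ K := by
  classical
  calc #s ≤ #((range (K + 1)).biUnion fun j => powersetCard j (univ : Finset n)) :=
        card_le_card fun t ht => mem_biUnion.2
          ⟨#t, mem_range.2 (Nat.lt_succ_of_le (h t ht)), mem_powersetCard.2 ⟨subset_univ t, rfl⟩⟩
    _ ≤ ∑ j ∈ range (K + 1), #(powersetCard j (univ : Finset n)) := card_biUnion_le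
    _ = ∑ j ∈ range (K + 1), (Fintype.card n).choose j := by simp [card_powersetCard]
    _ ≤ _ := Nat.sum_range_choose_le_pow _ K

lemma log_card_le_mul_log_of_binary {Y : Finset (n → ℝ)} (hY : Y.Nonempty)
    (hbin : ∀ x ∈ Y, ∀ i, x i = 0 ∨ x i = 1) {k : ℝ} (hk : ∀ x ∈ Y, ∑ i, |x i| ≤ k) :
    log #Y ≤ k * log (Fintype.card n + 1) := by
  classical
  set supp : (n → ℝ) → Finset n := fun x => {i | x i = 1}
  have hsum : ∀ x ∈ Y, ∑ i, |x i| = #(supp x) := fun x hx => by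
    rw [card_filter, Nat.cast_sum]
    refine sum_congr rfl fun i _ => ?_
    rcases hbin x hx i with h | h <;> simp [h]
  have hinj : Set.InjOn supp Y := fun x hx y hy hxy => funext fun i => by
    have hi : x i = 1 ↔ y i = 1 := by simpa [supp] using congrArg (i ∈ ·) hxy
    rcases hbin x hx i with h | h <;> rcases hbin y hy i with h' | h' <;> simp_all
  have hk0 : 0 ≤ k := by
    obtain ⟨x, hx⟩ := hY
    exact (hsum x hx ▸ Nat.cast_nonneg _).trans (hk x hx)
  have hcard : #Y ≤ (Fintype.card n + 1) ^ ⌊k⌋₊ := by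
    rw [← card_image_of_injOn hinj]
    refine card_le_pow_of_forall_card_le fun t ht => ?_
    obtain ⟨x, hx, rfl⟩ := mem_image.1 ht
    exact Nat.le_floor (hsum x hx ▸ hk x hx)
  calc log #Y ≤ log (((Fintype.card n + 1) ^ ⌊k⌋₊ : ℕ) : ℝ) :=
        log_le_log (by exact_mod_cast hY.card_pos) (by exact_mod_cast hcard)
    _ = ⌊k⌋₊ * log (Fintype.card n + 1) := by push_cast; rw [log_pow]
    _ ≤ k * log (Fintype.card n + 1) := by
        gcongr
        · exact log_nonneg (le_add_of_nonneg_left (Nat.cast_nonneg _))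
        · exact Nat.floor_le hk0

lemma exists_mem_convexHull_sum_div_add_le (Y : Finset (n → ℝ)) (hY : Y.Nonempty)
    (hY0 : ∀ y ∈ Y, 0 ≤ y) {δ : ℝ} (hδ : 0 < δ) :
    ∃ a ∈ convexHull ℝ (Y : Set (n → ℝ)), 0 ≤ a ∧
      ∀ y ∈ Y, ∑ i, y i / (δ + a i) ≤ Fintype.card n := by
  set K := convexHull ℝ (Y : Set (n → ℝ))
  have hK0 : K ⊆ Set.Ici 0 := convexHull_min hY0 (convex_Ici 0)
  have hpos : ∀ a ∈ K, ∀ i, 0 < δ + a i := fun a ha i => add_pos_of_pos_of_nonneg hδ (hK0 ha i)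
  have hcont : ContinuousOn (fun a : n → ℝ => ∑ i, log (δ + a i)) K :=
    continuousOn_finsetSum _ fun i _ =>
      ContinuousOn.log (by fun_prop) fun a ha => (hpos a ha i).ne'
  obtain ⟨a, haK, hmax⟩ := (Y.finite_toSet.isCompact_convexHull ℝ).exists_isMaxOn
    (convexHull_nonempty_iff.2 hY.to_set) hcont
  refine ⟨a, haK, hK0 haK, fun y hy => ?_⟩
  have hderiv : HasFDerivAt (fun a : n → ℝ => ∑ i, log (δ + a i))
      (∑ i, (δ + a i)⁻¹ • ContinuousLinearMap.proj i) a :=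
    HasFDerivAt.fun_sum fun i _ =>
      ((hasFDerivAt_apply i a).const_add δ).log (hpos a haK i).ne'
  have hfoc := hmax.localize.hasFDerivWithinAt_nonpos hderiv.hasFDerivWithinAt
    (sub_mem_posTangentConeAt_of_segment_subset
      ((convex_convexHull ℝ _).segment_subset haK (subset_convexHull ℝ _ hy)))
  simp only [FunLike.coe_sum, FunLike.coe_smul, Finset.sum_apply,
    Pi.smul_apply, ContinuousLinearMap.proj_apply, Pi.sub_apply, smul_eq_mul] at hfoc
  calc ∑ i, y i / (δ + a i) = ∑ i, (δ + a i)⁻¹ * (y i - a i) + ∑ i, a i / (δ + a i) := by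
        rw [← sum_add_distrib]
        exact sum_congr rfl fun i _ => by field_simp; ring
    _ ≤ 0 + ∑ _i : n, (1 : ℝ) := by
        gcongr with i
        exact div_le_one_of_le₀ (by linarith [hpos a haK i]) (hpos a haK i).le
    _ = Fintype.card n := by simp

lemma exists_mem_convexHull_forall_pos_sum_div_le [Nonempty n] (Y : Finset (n → ℝ))
    (hY0 : ∀ y ∈ Y, 0 ≤ y) (hcov : ∀ i, ∃ y ∈ Y, 1 ≤ y i) :
    ∃ a ∈ convexHull ℝ (Y : Set (n → ℝ)), (∀ i, 0 < a i) ∧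
      ∀ y ∈ Y, ∑ i, y i / a i ≤ 2 * Fintype.card n := by
  have hn : (0 : ℝ) < Fintype.card n := by exact_mod_cast Fintype.card_pos
  set δ : ℝ := (2 * Fintype.card n)⁻¹
  have hδ : 0 < δ := by positivity
  have hY : Y.Nonempty := let ⟨y, hy, _⟩ := hcov (Classical.arbitrary n); ⟨y, hy⟩
  obtain ⟨a, haK, ha0, hsum⟩ := exists_mem_convexHull_sum_div_add_le Y hY hY0 hδ
  have hpos : ∀ i, 0 < δ + a i := fun i => add_pos_of_pos_of_nonneg hδ (ha0 i)
  -- a covering vector forces `δ + a i ≥ 1 / card n = 2 δ`, i.e. `a i ≥ δ`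
  have hδa : ∀ i, δ ≤ a i := fun i => by
    obtain ⟨y, hy, hyi⟩ := hcov i
    have h1 : 1 / (δ + a i) ≤ Fintype.card n :=
      calc 1 / (δ + a i) ≤ y i / (δ + a i) := div_le_div_of_nonneg_right hyi (hpos i).le
        _ ≤ ∑ j, y j / (δ + a j) :=
            single_le_sum (f := fun j => y j / (δ + a j))
              (fun j _ => div_nonneg (hY0 y hy j) (hpos j).le) (mem_univ i)
        _ ≤ _ := hsum y hy
    rw [div_le_iff₀ (hpos i)] at h1
    have : δ * (2 * Fintype.card n) = 1 := inv_mul_cancel₀ (by positivity)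
    nlinarith
  refine ⟨a, haK, fun i => hδ.trans_le (hδa i), fun y hy => ?_⟩
  calc ∑ i, y i / a i ≤ ∑ i, 2 * (y i / (δ + a i)) := by
        gcongr with i
        rw [mul_div_assoc', div_le_div_iff₀ (hδ.trans_le (hδa i)) (hpos i)]
        have : y i * (δ + a i) ≤ y i * (2 * a i) := by
          gcongr
          · exact hY0 y hy i
          · linarith [hδa i]
        linarith
    _ ≤ 2 * Fintype.card n := by rw [← mul_sum]; linarith [hsum y hy]

end

/-- **Proposition 4 (semi-bandit case).** There is a universal constant `c > 0` such that
for every `d ≥ 3` and every nonempty finite `Y ⊆ {0,1}^d \ {0}` covering all coordinates,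
with `k = max_{x∈Y} ‖x‖₁`, there is a probability vector `w` on `Y` whose diagonal design
`A_semi(w)` has positive diagonal entries and whose squared Gaussian width
`(E_η[ max_{x∈Y} xᵀ A_semi(w)^{-1/2} η ])²` is at most `c · d · k · log d`. -/
theorem gaussian_width_semi_le_dk_logd :
    ∃ c : ℝ, 0 < c ∧
      ∀ (d : ℕ), 3 ≤ d →
      ∀ (Y : Finset (Fin d → ℝ)) (hY : Y.Nonempty),
        (∀ x ∈ Y, ∀ i, x i = 0 ∨ x i = 1) →
        (∀ x ∈ Y, x ≠ 0) →
        (∀ i : Fin d, ∃ x ∈ Y, x i = 1) →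
        ∃ w : (Fin d → ℝ) → ℝ,
          (∀ x ∈ Y, 0 ≤ w x) ∧ (∑ x ∈ Y, w x = 1) ∧
          (∀ i : Fin d, 0 < ∑ x ∈ Y, w x * x i) ∧
          (∫ η, Y.sup' hY
              (fun x => ∑ i, x i * η i / Real.sqrt (∑ y ∈ Y, w y * y i))
              ∂ stdGaussian d) ^ 2
            ≤ c * (d : ℝ) * (Y.sup' hY fun x => ∑ i, |x i|) * Real.log d := by
  refine ⟨8, by norm_num, fun d hd Y hY hbin _ hcov => ?_⟩
  have : Nonempty (Fin d) := ⟨⟨0, by omega⟩⟩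
  have hY0 : ∀ x ∈ Y, 0 ≤ x := fun x hx i => by rcases hbin x hx i with h | h <;> simp [h]
  obtain ⟨a, haY, ha0, hdesign⟩ := exists_mem_convexHull_forall_pos_sum_div_le Y hY0
    fun i => (hcov i).imp fun _ ⟨hx, hxi⟩ => ⟨hx, hxi.ge⟩
  obtain ⟨w, hw0, hw1, rfl⟩ := Finset.mem_convexHull'.1 haY
  simp only [Finset.sum_apply, Pi.smul_apply, smul_eq_mul, Fintype.card_fin] at ha0 hdesign
  refine ⟨w, hw0, hw1, ha0, ?_⟩
  set k := Y.sup' hY fun x => ∑ i, |x i|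
  have hk : ∀ x ∈ Y, ∑ i, |x i| ≤ k := fun x hx => le_sup' (fun x => ∑ i, |x i|) hx
  have hlog : log #Y ≤ k * (2 * log d) := by
    refine (log_card_le_mul_log_of_binary hY hbin hk).trans (mul_le_mul_of_nonneg_left ?_ ?_)
    · simpa using log_add_one_le_two_mul_log (x := d) (by norm_cast; omega)
    · exact (sum_nonneg fun i _ => abs_nonneg _).trans (hk _ hY.choose_spec)
  have hd : (0 : ℝ≥0) < 2 * d := by simp; omega
  calc _ ≤ 2 * ((2 * d : ℝ≥0) : ℝ) * log #Y :=
        sq_integral_finset_sup'_le hY (fun x hx => hasSubgaussianMGF_stdGaussian_sum_mul_div_sqrt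
          (hbin x hx) ha0 (by exact_mod_cast hdesign x hx)) hd
    _ ≤ 2 * (2 * d) * (k * (2 * log d)) := by push_cast; gcongr
    _ = 8 * d * k * log d := by ring
end

section
/- Let X ⊆ {0,1}^d and V ⊆ ℝ^d be finite sets, and let D ⊆ Δ_X be the set of probability vectors λ on X whose design A_semi(λ) has all diagonal entries positive. Then the function f(λ) = E_η[ max_{v∈V} v^⊤ A_semi(λ)^{-1/2} η ] is convex on D: for all λ, κ ∈ D and α ∈ [0,1], f(α λ + (1−α) κ) ≤ α f(λ) + (1−α) f(κ). (This is the paper's Proposition 13.) -/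
open MeasureTheory ProbabilityTheory

/-- The Gaussian-width objective `f(w) = E_η[max_{v∈V} vᵀ A_semi(w)^{-1/2} η]` for a
semi-bandit design given by a weight function `w` on the arm set `X`. -/
noncomputable def semiGaussWidth (d : ℕ) (X V : Finset (Fin d → ℝ)) (hV : V.Nonempty)
    (w : (Fin d → ℝ) → ℝ) : ℝ :=
  ∫ η, V.sup' hV (fun v => ∑ i, v i * η i / Real.sqrt (∑ x ∈ X, w x * x i))
    ∂ stdGaussian d

/-!
Write `G(u) = E_η[max_{v ∈ V} ∑ᵢ vᵢ ηᵢ uᵢ]`, so that `f(λ) = G(u(λ))` with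
`u(λ)ᵢ = A_semi(λ)ᵢᵢ^{-1/2}`. As the expectation of a maximum of linear functions of `u`, `G` is
convex. Flipping the sign of one coordinate of `η` preserves `N(0, I_d)`, so `G` is even in each
coordinate, and a convex function that is even in each coordinate is monotone on the nonnegative
orthant. Since `A_semi(λ)ᵢᵢ` is affine in `λ` and `t ↦ t^{-1/2}` is convex on `(0, ∞)`,
`u(αλ + (1-α)κ) ≤ α u(λ) + (1-α) u(κ)` coordinatewise, and monotonicity followed by convexity of
`G` gives the claim.
-/

open Set Function

lemma ConvexOn.finset_sup' {𝕜 E β ι : Type*} [Semiring 𝕜] [PartialOrder 𝕜] [AddCommMonoid E]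
    [AddCommMonoid β] [LinearOrder β] [IsOrderedAddMonoid β] [SMul 𝕜 E] [Module 𝕜 β]
    [PosSMulStrictMono 𝕜 β] {s : Set E} {t : Finset ι} (ht : t.Nonempty) {f : ι → E → β}
    (hf : ∀ i ∈ t, ConvexOn 𝕜 s (f i)) : ConvexOn 𝕜 s fun x => t.sup' ht fun i => f i x := by
  simpa only [← Finset.sup'_apply] using
    Finset.sup'_induction ht _ (fun _ hf _ hg => hf.sup hg) hf

lemma MeasureTheory.Integrable.finset_sup' {Ω ι β : Type*} [MeasurableSpace Ω] {μ : Measure Ω}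
    [NormedAddCommGroup β] [Lattice β] [HasSolidNorm β] [IsOrderedAddMonoid β]
    {t : Finset ι} (ht : t.Nonempty) {f : ι → Ω → β} (hf : ∀ i ∈ t, Integrable (f i) μ) :
    Integrable (fun ω => t.sup' ht fun i => f i ω) μ := by
  simpa only [← Finset.sup'_apply] using
    Finset.sup'_induction ht f (p := fun g => Integrable g μ) (fun _ hf _ hg => hf.sup hg) hf

lemma ConvexOn.integral {Ω E : Type*} [MeasurableSpace Ω] {μ : Measure Ω} [AddCommMonoid E]
    [Module ℝ E] {s : Set E} (hs : Convex ℝ s) {f : Ω → E → ℝ}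
    (hf : ∀ ω, ConvexOn ℝ s (f ω)) (hint : ∀ x ∈ s, Integrable (fun ω => f ω x) μ) :
    ConvexOn ℝ s fun x => ∫ ω, f ω x ∂μ := by
  refine ⟨hs, fun x hx y hy a b ha hb hab => ?_⟩
  have hx' : Integrable (fun ω => a • f ω x) μ := (hint x hx).smul a
  have hy' : Integrable (fun ω => b • f ω y) μ := (hint y hy).smul b
  calc ∫ ω, f ω (a • x + b • y) ∂μ ≤ ∫ ω, a • f ω x + b • f ω y ∂μ :=
        integral_mono (hint _ (hs hx hy ha hb hab)) (hx'.add hy') fun ω => (hf ω).2 hx hy ha hb hab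
    _ = a • ∫ ω, f ω x ∂μ + b • ∫ ω, f ω y ∂μ := by
        rw [integral_add hx' hy', integral_smul, integral_smul]

lemma convexOn_inv_sqrt : ConvexOn ℝ (Ioi 0) fun x : ℝ => (√x)⁻¹ := by
  have hsqrt : Real.sqrt '' Ioi 0 = Ioi 0 := by
    refine (image_subset_iff.2 fun x hx => Real.sqrt_pos.2 hx).antisymm fun y hy => ?_
    exact ⟨y ^ 2, show (0 : ℝ) < y ^ 2 from pow_pos hy 2, Real.sqrt_sq (le_of_lt hy)⟩
  have hinv : ConvexOn ℝ (Ioi 0) fun x : ℝ => x⁻¹ := by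
    simpa using convexOn_zpow (𝕜 := ℝ) (-1)
  refine ConvexOn.comp_concaveOn (g := fun x : ℝ => x⁻¹) ?_ ?_ ?_
  · rwa [hsqrt]
  · exact Real.strictConcaveOn_sqrt.concaveOn.subset Ioi_subset_Ici_self (convex_Ioi 0)
  · rw [hsqrt]; exact fun x hx y _ hxy => inv_anti₀ hx hxy

section EvenConvex

variable {ι : Type*} [DecidableEq ι] {F : (ι → ℝ) → ℝ}

lemma ConvexOn.le_update_of_abs_le (hF : ConvexOn ℝ univ F)
    (heven : ∀ u j t, F (update u j (-t)) = F (update u j t)) (u : ι → ℝ) (j : ι) {s t : ℝ}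
    (hst : |s| ≤ t) : F (update u j s) ≤ F (update u j t) := by
  have hseg : update u j s ∈ segment ℝ (update u j (-t)) (update u j t) := by
    rw [← Pi.image_update_segment, segment_eq_Icc (by linarith [abs_nonneg s])]
    exact mem_image_of_mem _ (abs_le.mp hst)
  simpa [heven] using hF.le_on_segment trivial trivial hseg

lemma ConvexOn.monotoneOn_of_update_neg [Fintype ι] (hF : ConvexOn ℝ univ F)
    (heven : ∀ u j t, F (update u j (-t)) = F (update u j t)) : MonotoneOn F (Ici 0) := by
  intro s hs m _ hsm
  suffices ∀ T : Finset ι, F s ≤ F (T.piecewise m s) by simpa using this Finset.univ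
  intro T
  induction T using Finset.induction_on with
  | empty => simp
  | insert j T hj ih =>
    rw [Finset.piecewise_insert]
    calc F s ≤ F (T.piecewise m s) := ih
      _ = F (update (T.piecewise m s) j (s j)) := by
        rw [← Finset.piecewise_eq_of_notMem T m s hj, update_eq_self]
      _ ≤ F (update (T.piecewise m s) j (m j)) :=
        hF.le_update_of_abs_le heven _ j ((abs_of_nonneg (hs j)).trans_le (hsm j))

end EvenConvex

instance isProbabilityMeasure_stdGaussian (d : ℕ) : IsProbabilityMeasure (stdGaussian d) := by
  unfold _root_.stdGaussian; infer_instance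

lemma integrable_eval_stdGaussian {d : ℕ} (i : Fin d) :
    Integrable (fun η : Fin d → ℝ => η i) (stdGaussian d) :=
  (measurePreserving_eval _ i).integrable_comp_of_integrable IsGaussian.integrable_id

lemma measurePreserving_negCoord_stdGaussian {d : ℕ} (j : Fin d) :
    MeasurePreserving (fun (η : Fin d → ℝ) i => if i = j then -η i else η i)
      (stdGaussian d) (stdGaussian d) := by
  refine measurePreserving_pi (fun _ => gaussianReal 0 1) (fun _ => gaussianReal 0 1)
    (f := fun i x => if i = j then -x else x) fun i => ?_
  by_cases hij : i = j
  · simpa [hij] using ⟨measurable_neg, by simpa using gaussianReal_map_neg (μ := 0) (v := 1)⟩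
  · simp only [hij, if_false]
    exact MeasurePreserving.id (gaussianReal 0 1)

noncomputable def scaledGaussWidth (d : ℕ) (V : Finset (Fin d → ℝ)) (hV : V.Nonempty)
    (u : Fin d → ℝ) : ℝ :=
  ∫ η, V.sup' hV (fun v => ∑ i, v i * η i * u i) ∂stdGaussian d

section ScaledGaussWidth

variable {d : ℕ} {V : Finset (Fin d → ℝ)} (hV : V.Nonempty)

lemma semiGaussWidth_eq_scaledGaussWidth (X : Finset (Fin d → ℝ)) (w : (Fin d → ℝ) → ℝ) :
    semiGaussWidth d X V hV w = scaledGaussWidth d V hV fun i => (√(∑ x ∈ X, w x * x i))⁻¹ := by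
  simp only [semiGaussWidth, scaledGaussWidth, div_eq_mul_inv]

lemma convexOn_scaledGaussWidth : ConvexOn ℝ univ (scaledGaussWidth d V hV) := by
  refine ConvexOn.integral convex_univ (fun η => ?_) fun u _ => ?_
  · refine ConvexOn.finset_sup' hV fun v _ => ?_
    exact ((dotProductBilin ℝ ℝ fun i => v i * η i).convexOn convex_univ).congr fun u _ => by
      simp only [dotProductBilin_apply_apply, dotProduct, mul_assoc]
  · refine Integrable.finset_sup' hV fun v _ => integrable_finsetSum _ fun i _ => ?_
    exact ((integrable_eval_stdGaussian i).const_mul (v i)).mul_const (u i)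

lemma scaledGaussWidth_update_neg (u : Fin d → ℝ) (j : Fin d) (t : ℝ) :
    scaledGaussWidth d V hV (update u j (-t)) = scaledGaussWidth d V hV (update u j t) := by
  have hinv : Involutive fun (η : Fin d → ℝ) i => if i = j then -η i else η i := fun η => by
    ext i; dsimp only; split_ifs <;> simp
  have hflip := measurePreserving_negCoord_stdGaussian j
  rw [scaledGaussWidth, ← hflip.integral_comp
    (MeasurableEquiv.ofInvolutive _ hinv hflip.measurable).measurableEmbedding]
  refine integral_congr_ae (ae_of_all _ fun η => Finset.sup'_congr hV rfl fun v _ => ?_)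
  refine Finset.sum_congr rfl fun i _ => ?_
  by_cases hij : i = j <;> simp [hij]

lemma monotoneOn_scaledGaussWidth : MonotoneOn (scaledGaussWidth d V hV) (Ici 0) :=
  (convexOn_scaledGaussWidth hV).monotoneOn_of_update_neg (scaledGaussWidth_update_neg hV)

end ScaledGaussWidth

theorem semi_gauss_width_convex_general (d : ℕ) (X V : Finset (Fin d → ℝ)) (hV : V.Nonempty)
    (w₁ w₂ : (Fin d → ℝ) → ℝ)
    (hw₁pos : ∀ i : Fin d, 0 < ∑ x ∈ X, w₁ x * x i)
    (hw₂pos : ∀ i : Fin d, 0 < ∑ x ∈ X, w₂ x * x i)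
    (α : ℝ) (hα0 : 0 ≤ α) (hα1 : α ≤ 1) :
    semiGaussWidth d X V hV (fun x => α * w₁ x + (1 - α) * w₂ x) ≤
      α * semiGaussWidth d X V hV w₁ + (1 - α) * semiGaussWidth d X V hV w₂ := by
  set u₁ : Fin d → ℝ := fun i => (√(∑ x ∈ X, w₁ x * x i))⁻¹
  set u₂ : Fin d → ℝ := fun i => (√(∑ x ∈ X, w₂ x * x i))⁻¹
  have hdesign : ∀ i, ∑ x ∈ X, (α * w₁ x + (1 - α) * w₂ x) * x i
      = α * ∑ x ∈ X, w₁ x * x i + (1 - α) * ∑ x ∈ X, w₂ x * x i := fun i => by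
    simp only [add_mul, mul_assoc, Finset.sum_add_distrib, Finset.mul_sum]
  have hle : ∀ i, (√(∑ x ∈ X, (α * w₁ x + (1 - α) * w₂ x) * x i))⁻¹ ≤ α * u₁ i + (1 - α) * u₂ i :=
    fun i => by
      rw [hdesign]
      exact convexOn_inv_sqrt.2 (hw₁pos i) (hw₂pos i) hα0 (by linarith) (by ring)
  rw [semiGaussWidth_eq_scaledGaussWidth, semiGaussWidth_eq_scaledGaussWidth,
    semiGaussWidth_eq_scaledGaussWidth]
  calc _ ≤ scaledGaussWidth d V hV (α • u₁ + (1 - α) • u₂) :=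
        monotoneOn_scaledGaussWidth hV (fun i => by positivity)
          (fun i => le_trans (by positivity) (hle i)) hle
    _ ≤ α * scaledGaussWidth d V hV u₁ + (1 - α) * scaledGaussWidth d V hV u₂ :=
        (convexOn_scaledGaussWidth hV).2 trivial trivial hα0 (by linarith) (by ring)

/-- **Proposition 13.** For finite `X ⊆ {0,1}^d` and finite `V ⊆ ℝ^d`, the function
`λ ↦ E_η[max_{v∈V} vᵀ A_semi(λ)^{-1/2} η]` is convex on the set of probability vectors on
`X` whose design has all diagonal entries positive. -/
theorem semi_gauss_width_convex (d : ℕ) (X V : Finset (Fin d → ℝ)) (hV : V.Nonempty)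
    (h01 : ∀ x ∈ X, ∀ i, x i = 0 ∨ x i = 1)
    (w₁ w₂ : (Fin d → ℝ) → ℝ)
    (hw₁0 : ∀ x ∈ X, 0 ≤ w₁ x) (hw₁1 : ∑ x ∈ X, w₁ x = 1)
    (hw₁pos : ∀ i : Fin d, 0 < ∑ x ∈ X, w₁ x * x i)
    (hw₂0 : ∀ x ∈ X, 0 ≤ w₂ x) (hw₂1 : ∑ x ∈ X, w₂ x = 1)
    (hw₂pos : ∀ i : Fin d, 0 < ∑ x ∈ X, w₂ x * x i)
    (α : ℝ) (hα0 : 0 ≤ α) (hα1 : α ≤ 1) :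
    semiGaussWidth d X V hV (fun x => α * w₁ x + (1 - α) * w₂ x) ≤
      α * semiGaussWidth d X V hV w₁ + (1 - α) * semiGaussWidth d X V hV w₂ :=
  semi_gauss_width_convex_general d X V hV w₁ w₂ hw₁pos hw₂pos α hα0 hα1
end

section
/- Let X ⊆ {0,1}^d be a finite nonempty set, x̄ ∈ X, θ̄ ∈ ℝ^d with θ̄^⊤(x̄ − x) ≥ 0 for all x ∈ X, β > 0, ψ ∈ (0,1], and let λ be a probability vector on X with Σ_{x∈X} λ_x x_i ≥ ψ for all i ∈ {1,…,d}. Define F(η) = max_{x∈X} (x̄ − x)^⊤ A_semi(λ)^{-1/2} η / ( β + θ̄^⊤(x̄ − x) ). Then: (i) |F(η)| ≤ (β ψ^{1/2})^{-1} Σ_{i=1}^d |η_i| for every η ∈ ℝ^d; and (ii) there is a universal constant c > 0 such that for η ~ N(0, I_d), F(η) is sub-Gaussian with variance proxy c·d/(β² ψ), i.e., E[ exp( s (F(η) − E F(η)) ) ] ≤ exp( c s² d / (2 β² ψ) ) for all s ∈ ℝ. (This is the sub-Gaussianity claim underlying the paper's Lemma 6, which justifies estimating the expected supremum by Monte Carlo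 averaging.) -/
open MeasureTheory ProbabilityTheory

/-- `F(η) = max_{x∈X} (x̄ - x)ᵀ A_semi(w)^{-1/2} η / (β + θ̄ᵀ(x̄ - x))`. -/
noncomputable def lagrangeSup (d : ℕ) (X : Finset (Fin d → ℝ)) (hX : X.Nonempty)
    (xb θb : Fin d → ℝ) (β : ℝ) (w : (Fin d → ℝ) → ℝ) (η : Fin d → ℝ) : ℝ :=
  X.sup' hX fun x =>
    (∑ i, (xb i - x i) * η i / Real.sqrt (∑ y ∈ X, w y * y i)) /
      (β + ∑ i, θb i * (xb i - x i))

/-!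
Each term of the maximum is a linear form in `η` with coefficients bounded by `(β √ψ)⁻¹`
(`|x̄ᵢ - xᵢ| ≤ 1`, design entries `≥ ψ`, denominators `≥ β`), so `F` is `(β √ψ)⁻¹`-Lipschitz for
the `ℓ¹` distance and vanishes at `0`; this is (i).

For (ii), let `f : ℝ → ℝ` be `K`-Lipschitz. Jensen gives `E e^{s(f - Ef)} ≤ E e^{sf} E e^{-sf}`,
and this product is the double integral of `cosh (s (f x - f y))`, which is monotone in
`|f x - f y| ≤ |K x - K y|`; for the linear function `K x` it equals `e^{s²K²}` under `N(0,1)`.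
Integrating out one coordinate at a time (the conditional mean is again `ℓ¹`-Lipschitz) yields
`E e^{s(F - EF)} ≤ e^{s²K²d}`, i.e. (ii) with `c = 2`.
-/

open Real Finset
open scoped NNReal

section Symmetrization

variable {α : Type*} [MeasurableSpace α] {μ : Measure α} {f g : α → ℝ} {s : ℝ}

lemma cosh_mul_sub (s a b : ℝ) :
    cosh (s * (a - b)) = (exp (s * a) * exp (-s * b) + exp (-s * a) * exp (s * b)) / 2 := by
  rw [cosh_eq, ← exp_add, ← exp_add]
  ring_nf

lemma integrable_cosh_mul_sub [SigmaFinite μ] (hpos : Integrable (fun x => exp (s * f x)) μ)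
    (hneg : Integrable (fun x => exp (-s * f x)) μ) :
    Integrable (fun p : α × α => cosh (s * (f p.1 - f p.2))) (μ.prod μ) := by
  simp_rw [cosh_mul_sub]
  exact ((hpos.mul_prod hneg).add (hneg.mul_prod hpos)).div_const 2

lemma integral_cosh_mul_sub [SigmaFinite μ] (hpos : Integrable (fun x => exp (s * f x)) μ)
    (hneg : Integrable (fun x => exp (-s * f x)) μ) :
    ∫ p, cosh (s * (f p.1 - f p.2)) ∂μ.prod μ =
      (∫ x, exp (s * f x) ∂μ) * ∫ x, exp (-s * f x) ∂μ := by
  simp_rw [cosh_mul_sub]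
  rw [integral_div, integral_add (hpos.mul_prod hneg) (hneg.mul_prod hpos),
    integral_prod_mul (fun x => exp (s * f x)) (fun x => exp (-s * f x)),
    integral_prod_mul (fun x => exp (-s * f x)) (fun x => exp (s * f x))]
  ring

lemma integral_exp_mul_mul_integral_exp_neg_mul_le [SigmaFinite μ]
    (hfg : ∀ x y, |f x - f y| ≤ |g x - g y|)
    (hf_pos : Integrable (fun x => exp (s * f x)) μ)
    (hf_neg : Integrable (fun x => exp (-s * f x)) μ)
    (hg_pos : Integrable (fun x => exp (s * g x)) μ)
    (hg_neg : Integrable (fun x => exp (-s * g x)) μ) :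
    (∫ x, exp (s * f x) ∂μ) * ∫ x, exp (-s * f x) ∂μ ≤
      (∫ x, exp (s * g x) ∂μ) * ∫ x, exp (-s * g x) ∂μ := by
  rw [← integral_cosh_mul_sub hf_pos hf_neg, ← integral_cosh_mul_sub hg_pos hg_neg]
  refine integral_mono (integrable_cosh_mul_sub hf_pos hf_neg)
    (integrable_cosh_mul_sub hg_pos hg_neg) fun p => cosh_le_cosh.2 ?_
  rw [abs_mul, abs_mul]
  exact mul_le_mul_of_nonneg_left (hfg p.1 p.2) (abs_nonneg s)

lemma integral_exp_mul_sub_integral_le [IsProbabilityMeasure μ] (hf : Integrable f μ)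
    (hneg : Integrable (fun x => exp (-s * f x)) μ) :
    ∫ x, exp (s * (f x - ∫ y, f y ∂μ)) ∂μ ≤
      (∫ x, exp (s * f x) ∂μ) * ∫ x, exp (-s * f x) ∂μ := by
  have hjensen : exp (∫ x, -s * f x ∂μ) ≤ ∫ x, exp (-s * f x) ∂μ :=
    convexOn_exp.map_integral_le continuous_exp.continuousOn isClosed_univ
      (.of_forall fun _ => Set.mem_univ _) (hf.const_mul (-s)) hneg
  have hsplit : ∀ x, exp (s * (f x - ∫ y, f y ∂μ)) = exp (s * f x) * exp (∫ y, -s * f y ∂μ) := by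
    intro x
    rw [integral_const_mul, ← exp_add]
    ring_nf
  simp_rw [hsplit]
  rw [integral_mul_const]
  exact mul_le_mul_of_nonneg_left hjensen (integral_nonneg fun _ => (exp_pos _).le)

end Symmetrization

section ExpIntegrability

variable {α : Type*} [MeasurableSpace α] {μ : Measure α} {f φ : α → ℝ}

lemma integrable_exp_mul_of_abs_le (hφ : ∀ a, Integrable (fun x => exp (a * φ x)) μ)
    (hf : AEStronglyMeasurable f μ) {c K : ℝ} (hfφ : ∀ x, |f x| ≤ c + K * φ x) (s : ℝ) :
    Integrable (fun x => exp (s * f x)) μ := by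
  refine ((hφ (|s| * K)).const_mul (exp (|s| * c))).mono'
    (continuous_exp.comp_aestronglyMeasurable (hf.const_mul s)) (.of_forall fun x => ?_)
  rw [norm_of_nonneg (exp_pos _).le, ← exp_add, exp_le_exp]
  calc s * f x ≤ |s| * |f x| := (le_abs_self _).trans (abs_mul s (f x)).le
    _ ≤ |s| * (c + K * φ x) := mul_le_mul_of_nonneg_left (hfφ x) (abs_nonneg s)
    _ = |s| * c + |s| * K * φ x := by ring

lemma integrable_of_forall_integrable_exp_mul
    (hf : ∀ s, Integrable (fun x => exp (s * f x)) μ) : Integrable f μ := by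
  have hset : integrableExpSet f μ = Set.univ := Set.eq_univ_of_forall hf
  exact integrable_of_mem_interior_integrableExpSet (by simp [hset])

end ExpIntegrability

section GaussianReal

variable {m : ℝ} {v : ℝ≥0}

lemma integral_exp_mul_gaussianReal (t : ℝ) :
    ∫ x, exp (t * x) ∂gaussianReal m v = exp (m * t + v * t ^ 2 / 2) :=
  congrFun mgf_fun_id_gaussianReal t

lemma integrable_exp_mul_abs_gaussianReal (a : ℝ) :
    Integrable (fun x => exp (a * |x|)) (gaussianReal m v) :=
  integrable_exp_mul_abs (X := fun x => x) (integrable_exp_mul_gaussianReal a)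
    (integrable_exp_mul_gaussianReal (-a))

namespace LipschitzWith

variable {K : ℝ≥0} {f : ℝ → ℝ}

lemma abs_le_abs_zero_add (hf : LipschitzWith K f) (x : ℝ) : |f x| ≤ |f 0| + K * |x| := by
  have h := hf.dist_le_mul x 0
  rw [Real.dist_eq, Real.dist_eq, sub_zero] at h
  linarith [abs_sub_abs_le_abs_sub (f x) (f 0)]

lemma integrable_exp_mul_gaussianReal (hf : LipschitzWith K f) (s : ℝ) :
    Integrable (fun x => exp (s * f x)) (gaussianReal m v) :=
  integrable_exp_mul_of_abs_le integrable_exp_mul_abs_gaussianReal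
    hf.continuous.aestronglyMeasurable hf.abs_le_abs_zero_add s

lemma integrable_gaussianReal (hf : LipschitzWith K f) : Integrable f (gaussianReal m v) :=
  integrable_of_forall_integrable_exp_mul hf.integrable_exp_mul_gaussianReal

theorem integral_exp_mul_sub_integral_gaussianReal_le (hf : LipschitzWith K f) (s : ℝ) :
    ∫ x, exp (s * (f x - ∫ y, f y ∂gaussianReal m v)) ∂gaussianReal m v ≤
      exp (v * s ^ 2 * K ^ 2) := by
  have hlin : ∀ x y, |f x - f y| ≤ |K * x - K * y| := fun x y => by
    rw [← mul_sub, abs_mul, NNReal.abs_eq, ← Real.dist_eq, ← Real.dist_eq]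
    exact hf.dist_le_mul x y
  calc _ ≤ (∫ x, exp (s * f x) ∂gaussianReal m v) * ∫ x, exp (-s * f x) ∂gaussianReal m v :=
        integral_exp_mul_sub_integral_le hf.integrable_gaussianReal
          (hf.integrable_exp_mul_gaussianReal _)
    _ ≤ (∫ x, exp (s * (K * x)) ∂gaussianReal m v) *
          ∫ x, exp (-s * (K * x)) ∂gaussianReal m v :=
        integral_exp_mul_mul_integral_exp_neg_mul_le hlin (hf.integrable_exp_mul_gaussianReal _)
          (hf.integrable_exp_mul_gaussianReal _)
          (by simpa only [mul_assoc] using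
            ProbabilityTheory.integrable_exp_mul_gaussianReal (s * (K : ℝ)))
          (by simpa only [mul_assoc] using
            ProbabilityTheory.integrable_exp_mul_gaussianReal (-s * (K : ℝ)))
    _ = exp (v * s ^ 2 * K ^ 2) := by
        simp_rw [← mul_assoc, integral_exp_mul_gaussianReal, ← exp_add]
        ring_nf

end LipschitzWith

end GaussianReal

lemma integral_pi_fin_succ {α E : Type*} [MeasurableSpace α] [NormedAddCommGroup E]
    [NormedSpace ℝ E] (μ : Measure α) [SigmaFinite μ] {n : ℕ} {g : (Fin (n + 1) → α) → E}
    (hg : Integrable g (Measure.pi fun _ => μ)) :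
    ∫ x, g x ∂Measure.pi (fun _ => μ) =
      ∫ ζ, ∫ a, g (Fin.cons a ζ) ∂μ ∂Measure.pi (fun _ : Fin n => μ) := by
  set e := MeasurableEquiv.piFinSuccAbove (fun _ : Fin (n + 1) => α) 0
  have he := (measurePreserving_piFinSuccAbove (fun _ : Fin (n + 1) => μ) 0).symm
  rw [← he.integral_comp', integral_prod_symm (fun p => g (e.symm p))
    ((he.integrable_comp_emb e.symm.measurableEmbedding).2 hg)]
  have hcons (p : α × (Fin n → α)) : e.symm p = Fin.cons p.1 p.2 := by
    simp [e, MeasurableEquiv.piFinSuccAbove_symm_apply, Fin.insertNthEquiv]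
  simp only [hcons]

instance inst_s13 (d : ℕ) : IsProbabilityMeasure (stdGaussian d) := by
  unfold _root_.stdGaussian
  infer_instance

def L1LipschitzWith {ι : Type*} [Fintype ι] (K : ℝ≥0) (F : (ι → ℝ) → ℝ) : Prop :=
  ∀ x y, |F x - F y| ≤ K * ∑ i, |x i - y i|

namespace L1LipschitzWith

section Fintype

variable {ι α : Type*} [Fintype ι] {K : ℝ≥0} {F : (ι → ℝ) → ℝ}

lemma sub_const (hF : L1LipschitzWith K F) (c : ℝ) : L1LipschitzWith K fun x => F x - c :=
  fun x y => by simpa only [sub_sub_sub_cancel_right] using hF x y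

lemma abs_le_abs_zero_add (hF : L1LipschitzWith K F) (x : ι → ℝ) :
    |F x| ≤ |F 0| + K * ∑ i, |x i| := by
  have h := hF x 0
  simp only [Pi.zero_apply, sub_zero] at h
  linarith [abs_sub_abs_le_abs_sub (F x) (F 0)]

lemma lipschitzWith (hF : L1LipschitzWith K F) : LipschitzWith (K * Fintype.card ι) F := by
  refine LipschitzWith.of_dist_le_mul fun x y => ?_
  calc dist (F x) (F y) ≤ K * ∑ i, |x i - y i| := hF x y
    _ ≤ K * ∑ _i : ι, dist x y := by
        gcongr with i
        exact dist_le_pi_dist x y i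
    _ = _ := by simp [mul_assoc]

lemma finset_sup' {X : Finset α} (hX : X.Nonempty) {f : α → (ι → ℝ) → ℝ}
    (hf : ∀ x ∈ X, L1LipschitzWith K (f x)) :
    L1LipschitzWith K fun η => X.sup' hX fun x => f x η := by
  have hle (η η' : ι → ℝ) :
      X.sup' hX (fun x => f x η) ≤ X.sup' hX (fun x => f x η') + K * ∑ i, |η i - η' i| :=
    Finset.sup'_le _ _ fun x hx => by
      linarith [(abs_sub_le_iff.1 (hf x hx η η')).1, Finset.le_sup' (fun x => f x η') hx]
  intro η η'
  rw [abs_sub_le_iff]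
  constructor
  · linarith [hle η η']
  · simp_rw [abs_sub_comm (η _)]
    linarith [hle η' η]

lemma sum_mul {c : ι → ℝ} (hc : ∀ i, |c i| ≤ K) : L1LipschitzWith K fun η => ∑ i, c i * η i :=
  fun η η' => by
    calc |∑ i, c i * η i - ∑ i, c i * η' i| = |∑ i, c i * (η i - η' i)| := by
          simp_rw [mul_sub, Finset.sum_sub_distrib]
      _ ≤ ∑ i, |c i| * |η i - η' i| := by
          simpa only [abs_mul] using Finset.abs_sum_le_sum_abs (fun i => c i * (η i - η' i)) univ
      _ ≤ K * ∑ i, |η i - η' i| := by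
          rw [Finset.mul_sum]
          gcongr with i
          exact hc i

variable {m : ℝ} {v : ℝ≥0}

lemma integrable_exp_mul_gaussian (hF : L1LipschitzWith K F) (s : ℝ) :
    Integrable (fun x => exp (s * F x)) (Measure.pi fun _ : ι => gaussianReal m v) := by
  have hφ (a : ℝ) : Integrable (fun x : ι → ℝ => exp (a * ∑ i, |x i|))
      (Measure.pi fun _ : ι => gaussianReal m v) := by
    simp_rw [mul_sum, exp_sum]
    exact Integrable.fintype_prod fun _ => integrable_exp_mul_abs_gaussianReal a
  exact integrable_exp_mul_of_abs_le hφ hF.lipschitzWith.continuous.aestronglyMeasurable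
    hF.abs_le_abs_zero_add s

lemma integrable_gaussian (hF : L1LipschitzWith K F) :
    Integrable F (Measure.pi fun _ : ι => gaussianReal m v) :=
  integrable_of_forall_integrable_exp_mul hF.integrable_exp_mul_gaussian

end Fintype

variable {n : ℕ} {K : ℝ≥0} {F : (Fin (n + 1) → ℝ) → ℝ}

lemma lipschitzWith_cons_left (hF : L1LipschitzWith K F) (ζ : Fin n → ℝ) :
    LipschitzWith K fun a => F (Fin.cons a ζ) :=
  LipschitzWith.of_dist_le_mul fun a b => by
    simpa [Real.dist_eq, Fin.sum_univ_succ] using hF (Fin.cons a ζ) (Fin.cons b ζ)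

lemma cons_right (hF : L1LipschitzWith K F) (a : ℝ) :
    L1LipschitzWith K fun ζ : Fin n → ℝ => F (Fin.cons a ζ) :=
  fun ζ ζ' => by simpa [Fin.sum_univ_succ] using hF (Fin.cons a ζ) (Fin.cons a ζ')

lemma integral_cons (hF : L1LipschitzWith K F) (m : ℝ) (v : ℝ≥0) :
    L1LipschitzWith K fun ζ : Fin n → ℝ => ∫ a, F (Fin.cons a ζ) ∂gaussianReal m v := by
  intro ζ ζ'
  rw [← integral_sub (hF.lipschitzWith_cons_left ζ).integrable_gaussianReal
    (hF.lipschitzWith_cons_left ζ').integrable_gaussianReal]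
  simpa using norm_integral_le_of_norm_le_const (μ := gaussianReal m v)
    (f := fun a => F (Fin.cons a ζ) - F (Fin.cons a ζ'))
    (.of_forall fun a => hF.cons_right a ζ ζ')

end L1LipschitzWith

theorem L1LipschitzWith.integral_exp_mul_sub_integral_stdGaussian_le {d : ℕ}
    {F : (Fin d → ℝ) → ℝ} {K : ℝ≥0} (hF : L1LipschitzWith K F) (s : ℝ) :
    ∫ η, exp (s * (F η - ∫ η', F η' ∂stdGaussian d)) ∂stdGaussian d ≤
      exp (s ^ 2 * K ^ 2 * d) := by
  induction d with
  | zero =>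
    have hconst (η : Fin 0 → ℝ) : F η = F 0 := congrArg F (Subsingleton.elim _ _)
    simp [hconst]
  | succ n ih =>
    set m := ∫ η, F η ∂stdGaussian (n + 1)
    set G := fun ζ : Fin n → ℝ => ∫ a, F (Fin.cons a ζ) ∂gaussianReal 0 1
    have hG : L1LipschitzWith K G := hF.integral_cons 0 1
    have hmean : m = ∫ ζ, G ζ ∂stdGaussian n := integral_pi_fin_succ _ hF.integrable_gaussian
    have hinner (ζ : Fin n → ℝ) : ∫ a, exp (s * (F (Fin.cons a ζ) - m)) ∂gaussianReal 0 1 ≤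
        exp (s ^ 2 * K ^ 2) * exp (s * (G ζ - m)) := by
      have hsplit (a : ℝ) : exp (s * (F (Fin.cons a ζ) - m)) =
          exp (s * (F (Fin.cons a ζ) - G ζ)) * exp (s * (G ζ - m)) := by
        rw [← exp_add]
        ring_nf
      simp_rw [hsplit]
      rw [integral_mul_const]
      gcongr
      simpa [G] using (hF.lipschitzWith_cons_left ζ).integral_exp_mul_sub_integral_gaussianReal_le
        (m := 0) (v := 1) s
    calc ∫ η, exp (s * (F η - m)) ∂stdGaussian (n + 1)
        = ∫ ζ, ∫ a, exp (s * (F (Fin.cons a ζ) - m)) ∂gaussianReal 0 1 ∂stdGaussian n :=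
          integral_pi_fin_succ _ ((hF.sub_const m).integrable_exp_mul_gaussian s)
      _ ≤ ∫ ζ, exp (s ^ 2 * K ^ 2) * exp (s * (G ζ - m)) ∂stdGaussian n :=
          integral_mono_of_nonneg (.of_forall fun _ => integral_nonneg fun _ => (exp_pos _).le)
            (((hG.sub_const m).integrable_exp_mul_gaussian s).const_mul _) (.of_forall hinner)
      _ = exp (s ^ 2 * K ^ 2) *
            ∫ ζ, exp (s * (G ζ - ∫ ζ', G ζ' ∂stdGaussian n)) ∂stdGaussian n := by
          rw [integral_const_mul, hmean]
      _ ≤ exp (s ^ 2 * K ^ 2) * exp (s ^ 2 * K ^ 2 * n) := by gcongr; exact ih hG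
      _ = exp (s ^ 2 * K ^ 2 * (n + 1 : ℕ)) := by
          rw [← exp_add]
          push_cast
          ring_nf

section LagrangeSup

variable {d : ℕ} {X : Finset (Fin d → ℝ)} (hX : X.Nonempty) {xb θb : Fin d → ℝ} {β ψ : ℝ}
  {w : (Fin d → ℝ) → ℝ}

lemma lagrangeSup_zero : lagrangeSup d X hX xb θb β w 0 = 0 := by
  simp [lagrangeSup]

lemma lagrangeSup_l1LipschitzWith (hcube : ∀ x ∈ X, ∀ i, x i = 0 ∨ x i = 1) (hxb : xb ∈ X)
    (hgap : ∀ x ∈ X, 0 ≤ ∑ i, θb i * (xb i - x i)) (hβ : 0 < β) (hψ : 0 < ψ)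
    (hdesign : ∀ i, ψ ≤ ∑ x ∈ X, w x * x i) :
    L1LipschitzWith (β * √ψ)⁻¹.toNNReal (lagrangeSup d X hX xb θb β w) := by
  refine L1LipschitzWith.finset_sup' hX fun x hx => ?_
  set D := β + ∑ i, θb i * (xb i - x i)
  have hD : β ≤ D := le_add_of_nonneg_right (hgap x hx)
  have hlinear : (fun η : Fin d → ℝ => (∑ i, (xb i - x i) * η i / √(∑ y ∈ X, w y * y i)) / D) =
      fun η => ∑ i, ((xb i - x i) / √(∑ y ∈ X, w y * y i) / D) * η i := by
    ext η
    rw [Finset.sum_div]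
    exact Finset.sum_congr rfl fun i _ => by ring
  rw [hlinear]
  refine L1LipschitzWith.sum_mul fun i => ?_
  have hdiff : |xb i - x i| ≤ 1 := by
    rcases hcube x hx i with h | h <;> rcases hcube xb hxb i with h' | h' <;> norm_num [h, h']
  have hsqrt : √ψ ≤ √(∑ y ∈ X, w y * y i) := Real.sqrt_le_sqrt (hdesign i)
  have hsqrtψ : 0 < √ψ := Real.sqrt_pos.2 hψ
  rw [Real.coe_toNNReal _ (by positivity), abs_div, abs_div, abs_of_pos (hsqrtψ.trans_le hsqrt),
    abs_of_pos (hβ.trans_le hD), div_div]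
  calc |xb i - x i| / (√(∑ y ∈ X, w y * y i) * D) ≤ 1 / (√ψ * β) := by gcongr
    _ = (β * √ψ)⁻¹ := by rw [one_div, mul_comm]

end LagrangeSup

/-- **Sub-Gaussianity of the supremum (underlying Lemma 6).** For `X ⊆ {0,1}^d`,
`x̄ ∈ X`, nonnegative estimated gaps, `β > 0`, `ψ ∈ (0,1]` and a probability vector `w`
whose design entries are all at least `ψ`: (i) `|F(η)| ≤ (β ψ^{1/2})⁻¹ Σ_i |η_i|`
pointwise; and (ii) for a universal constant `c > 0`, `F(η)` with `η ~ N(0, I_d)` is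
sub-Gaussian with variance proxy `c d / (β² ψ)`. -/
theorem lagrangeSup_bounded_and_subgaussian :
    (∀ (d : ℕ) (X : Finset (Fin d → ℝ)) (hX : X.Nonempty)
        (xb θb : Fin d → ℝ) (β ψ : ℝ) (w : (Fin d → ℝ) → ℝ),
      (∀ x ∈ X, ∀ i, x i = 0 ∨ x i = 1) → xb ∈ X →
      (∀ x ∈ X, 0 ≤ ∑ i, θb i * (xb i - x i)) →
      0 < β → 0 < ψ → ψ ≤ 1 →
      (∀ x ∈ X, 0 ≤ w x) → (∑ x ∈ X, w x = 1) →
      (∀ i : Fin d, ψ ≤ ∑ x ∈ X, w x * x i) →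
      ∀ η : Fin d → ℝ,
        |lagrangeSup d X hX xb θb β w η| ≤ (β * Real.sqrt ψ)⁻¹ * ∑ i, |η i|) ∧
    (∃ c : ℝ, 0 < c ∧
      ∀ (d : ℕ) (X : Finset (Fin d → ℝ)) (hX : X.Nonempty)
        (xb θb : Fin d → ℝ) (β ψ : ℝ) (w : (Fin d → ℝ) → ℝ),
      (∀ x ∈ X, ∀ i, x i = 0 ∨ x i = 1) → xb ∈ X →
      (∀ x ∈ X, 0 ≤ ∑ i, θb i * (xb i - x i)) →
      0 < β → 0 < ψ → ψ ≤ 1 →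
      (∀ x ∈ X, 0 ≤ w x) → (∑ x ∈ X, w x = 1) →
      (∀ i : Fin d, ψ ≤ ∑ x ∈ X, w x * x i) →
      ∀ s : ℝ,
        (∫ η, Real.exp (s * (lagrangeSup d X hX xb θb β w η -
            ∫ η', lagrangeSup d X hX xb θb β w η' ∂ stdGaussian d)) ∂ stdGaussian d) ≤
          Real.exp (c * s ^ 2 * d / (2 * β ^ 2 * ψ))) := by
  constructor
  · intro d X hX xb θb β ψ w hcube hxb hgap hβ hψ _ _ _ hdesign η
    have hlip := lagrangeSup_l1LipschitzWith hX hcube hxb hgap hβ hψ hdesign η 0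
    rw [Real.coe_toNNReal _ (by positivity)] at hlip
    simpa [lagrangeSup_zero] using hlip
  · refine ⟨2, two_pos, fun d X hX xb θb β ψ w hcube hxb hgap hβ hψ _ _ _ hdesign s => ?_⟩
    have hconc := (lagrangeSup_l1LipschitzWith hX hcube hxb hgap hβ hψ hdesign
      ).integral_exp_mul_sub_integral_stdGaussian_le s
    have hproxy : 2 * s ^ 2 * d / (2 * β ^ 2 * ψ) =
        s ^ 2 * ((β * √ψ)⁻¹.toNNReal : ℝ) ^ 2 * d := by
      rw [Real.coe_toNNReal _ (by positivity), inv_pow, mul_pow, Real.sq_sqrt hψ.le]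
      field_simp
    rwa [hproxy]
end
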